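/- arXiv:1701.02170 — 5 statements merged into one kernel-verified Lean document; each statement's English description precedes it below -/
import Mathlib

section
/- Let E be a compact subset of the closure of a domain D in ℝ^N with Hausdorff measure ℋ^m(E) = 0 where m < N, and let K ⊆ E be compact. Then every continuous map f : K → ℝ^m \ {0} which is constant on K ∩ ∂D extends to a continuous map E → ℝ^m \ {0} which is constant on E ∩ ∂D. -/
/-!
Glue `f` on `K` with a nonzero constant on `E ∩ ∂D` and extend the result to a continuous map `H`
on all of `ℝ^N` (Tietze). Then approximate `H` uniformly by a smooth map `G`. Being locally
Lipschitz, `G` maps the `ℋ^m`-null compact set `E` to an `ℋ^m`-null set, which has empty interior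
in `ℝ^m`, so `G - v` vanishes nowhere on `E` for some arbitrarily small `v`. Finally interpolate
between `H`, kept where `‖H‖` is large (in particular on the glued set), and `G - v`, used where
`‖H‖` is small.
-/

open MeasureTheory Metric Set Topology Module
open scoped ContDiff Manifold

section

variable {X F : Type*} [NormedAddCommGroup X] [NormedSpace ℝ X]
  [NormedAddCommGroup F] [NormedSpace ℝ F]

theorem dense_compl_of_hausdorffMeasure_finrank_eq_zero [FiniteDimensional ℝ F]
    [MeasurableSpace F] [BorelSpace F] {s : Set F} (hs : μH[finrank ℝ F] s = 0) :
    Dense sᶜ := by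
  rw [← interior_eq_empty_iff_dense_compl, eq_empty_iff_forall_notMem]
  intro x hx
  let e : F ≃L[ℝ] (Fin (finrank ℝ F) → ℝ) :=
    ContinuousLinearEquiv.ofFinrankEq (finrank_fin_fun ℝ).symm
  have hes : μH[finrank ℝ F] (e '' s) = 0 :=
    le_antisymm ((e.lipschitz.hausdorffMeasure_image_le (Nat.cast_nonneg _) s).trans_eq
      (by rw [hs, mul_zero])) bot_le
  have hnhds : e '' s ∈ 𝓝 (e x) :=
    e.toHomeomorph.isOpenMap.image_mem_nhds (mem_interior_iff_mem_nhds.1 hx)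
  have hpos := Measure.measure_pos_of_mem_nhds volume hnhds
  rw [← hausdorffMeasure_pi_real, Fintype.card_fin] at hpos
  exact hpos.ne' hes

theorem LocallyLipschitzOn.hausdorffMeasure_image_eq_zero {α β : Type*}
    [MetricSpace α] [MeasurableSpace α] [BorelSpace α]
    [MetricSpace β] [MeasurableSpace β] [BorelSpace β] {f : α → β} {s : Set α}
    (hf : LocallyLipschitzOn s f) (hs : IsCompact s) {d : ℝ} (hd : 0 ≤ d)
    (hs0 : μH[d] s = 0) : μH[d] (f '' s) = 0 := by
  obtain ⟨C, hC⟩ := hf.exists_lipschitzOnWith_of_compact hs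
  exact le_antisymm ((hC.hausdorffMeasure_image_le hd).trans_eq (by rw [hs0, mul_zero])) bot_le

theorem ContDiff.exists_norm_lt_forall_ne [FiniteDimensional ℝ F] [MeasurableSpace F]
    [BorelSpace F] [MeasurableSpace X] [BorelSpace X] {G : X → F} (hG : ContDiff ℝ 1 G)
    {E : Set X} (hE : IsCompact E) (hE0 : μH[finrank ℝ F] E = 0) {ε : ℝ} (hε : 0 < ε) :
    ∃ v, ‖v‖ < ε ∧ ∀ x ∈ E, G x ≠ v := by
  have hGE := hG.locallyLipschitz.locallyLipschitzOn.hausdorffMeasure_image_eq_zero hE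
    (Nat.cast_nonneg _) hE0
  obtain ⟨v, hvG, hv⟩ := (dense_compl_of_hausdorffMeasure_finrank_eq_zero hGE).exists_mem_open
    isOpen_ball ⟨0, mem_ball_self hε⟩
  exact ⟨v, mem_ball_zero_iff.1 hv, fun x hx hxv => hvG ⟨x, hx, hxv⟩⟩

theorem Continuous.exists_contDiff_dist_lt [FiniteDimensional ℝ X] {H : X → F}
    (hH : Continuous H) {ε : ℝ} (hε : 0 < ε) :
    ∃ G : X → F, ContDiff ℝ ∞ G ∧ ∀ x, dist (G x) (H x) < ε := by
  obtain ⟨G, hG⟩ := exists_contMDiffMap_forall_mem_convex_of_local_const 𝓘(ℝ, X)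
    (n := ⊤) (t := fun x => ball (H x) ε) (fun x => convex_ball _ _)
    fun x => ⟨H x, hH.continuousAt.eventually (isOpen_ball.mem_nhds (mem_ball_self hε))
      |>.mono fun y hy => mem_ball_comm.1 hy⟩
  exact ⟨G, contMDiff_iff_contDiff.1 G.contMDiff, hG⟩

theorem exists_continuous_eq_of_le_norm_of_norm_sub_lt {Y : Type*} [TopologicalSpace Y]
    {H w : Y → F} (hH : Continuous H) (hw : Continuous w) {η : ℝ} (hη : 0 < η)
    (hwH : ∀ y, ‖w y - H y‖ < η) :
    ∃ g : Y → F, Continuous g ∧ (∀ y, 2 * η ≤ ‖H y‖ → g y = H y) ∧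
      ∀ y, w y ≠ 0 → g y ≠ 0 := by
  -- `ψ = 0` where `‖H‖ ≥ 2η`, and `ψ < 1` forces `‖H‖ > η`, which beats the perturbation
  set ψ : Y → ℝ := fun y => max 0 (min 1 (2 - ‖H y‖ / η))
  refine ⟨fun y => H y + ψ y • (w y - H y), by fun_prop, fun y hy => ?_, fun y hwy => ?_⟩
  · have : 2 - ‖H y‖ / η ≤ 0 := by rw [sub_nonpos, le_div_iff₀ hη]; linarith
    simp [ψ, min_le_of_right_le this]
  by_cases hψ : ψ y = 1
  · simpa [hψ] using hwy
  have hHy : η < ‖H y‖ := by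
    by_contra! hle
    have : 1 ≤ 2 - ‖H y‖ / η := by linarith [(div_le_one hη).2 hle]
    exact hψ (by simp [ψ, min_eq_left this])
  have hsmall : ‖ψ y • (w y - H y)‖ < η := by
    rw [norm_smul, Real.norm_of_nonneg (le_max_left _ _)]
    calc ψ y * ‖w y - H y‖ ≤ ‖w y - H y‖ :=
          mul_le_of_le_one_left (norm_nonneg _) (max_le zero_le_one (min_le_left _ _))
      _ < η := hwH y
  intro h0
  rw [eq_neg_of_add_eq_zero_left h0, norm_neg] at hHy
  linarith

theorem ContinuousOn.exists_continuous_eqOn_forall_ne_zero [FiniteDimensional ℝ X]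
    [FiniteDimensional ℝ F] [MeasurableSpace X] [BorelSpace X] {S E : Set X}
    (hS : IsCompact S) (hE : IsCompact E) (hE0 : μH[finrank ℝ F] E = 0) {h : X → F}
    (hh : ContinuousOn h S) (hh0 : ∀ x ∈ S, h x ≠ 0) :
    ∃ g : X → F, Continuous g ∧ EqOn g h S ∧ ∀ x ∈ E, g x ≠ 0 := by
  borelize F
  obtain ⟨δ, hδ, hδh⟩ := hS.exists_forall_le' hh.norm fun x hx => norm_pos_iff.2 (hh0 x hx)
  obtain ⟨H, hHS⟩ :=
    ContinuousMap.exists_restrict_eq hS.isClosed ⟨S.domRestrict h, hh.domRestrict⟩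
  have hHh : EqOn H h S := fun x hx => congr($hHS ⟨x, hx⟩)
  obtain ⟨G, hG, hGH⟩ := H.continuous.exists_contDiff_dist_lt (by positivity : 0 < δ / 4)
  obtain ⟨v, hv, hGv⟩ := (hG.of_le (by simp)).exists_norm_lt_forall_ne hE hE0
    (by positivity : 0 < δ / 4)
  have hwH : ∀ x, ‖(G x - v) - H x‖ < δ / 2 := fun x => calc
    ‖(G x - v) - H x‖ ≤ dist (G x) (H x) + ‖v‖ := by
      rw [sub_right_comm, dist_eq_norm]; exact norm_sub_le _ _
    _ < δ / 2 := by linarith [hGH x]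
  obtain ⟨g, hg, hgH, hg0⟩ := exists_continuous_eq_of_le_norm_of_norm_sub_lt H.continuous
    (hG.continuous.sub continuous_const) (half_pos hδ) hwH
  refine ⟨g, hg, fun x hx => ?_, fun x hx => hg0 x (sub_ne_zero.2 (hGv x hx))⟩
  rw [hgH x (by rw [hHh hx]; linarith [hδh x hx]), hHh hx]

end

theorem chirka_lemma2_extension_general
    {N m : ℕ} (hm : 1 ≤ m)
    (D : Set (EuclideanSpace ℝ (Fin N)))
    (E : Set (EuclideanSpace ℝ (Fin N))) (hEcpt : IsCompact E)
    (hE0 : μH[(m : ℝ)] E = 0)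
    (K : Set (EuclideanSpace ℝ (Fin N))) (hKcpt : IsCompact K)
    (f : EuclideanSpace ℝ (Fin N) → EuclideanSpace ℝ (Fin m))
    (hfc : ContinuousOn f K) (hf0 : ∀ x ∈ K, f x ≠ 0)
    (a : EuclideanSpace ℝ (Fin m)) (hfa : ∀ x ∈ K ∩ frontier D, f x = a) :
    ∃ g : EuclideanSpace ℝ (Fin N) → EuclideanSpace ℝ (Fin m),
      ContinuousOn g E ∧ (∀ x ∈ K, g x = f x) ∧ (∀ x ∈ E, g x ≠ 0) ∧
      ∃ b : EuclideanSpace ℝ (Fin m), ∀ x ∈ E ∩ frontier D, g x = b := by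
  classical
  obtain ⟨b, hb0, hfb⟩ :
      ∃ b : EuclideanSpace ℝ (Fin m), b ≠ 0 ∧ ∀ x ∈ K ∩ frontier D, f x = b := by
    by_cases ha : a = 0
    · have : NeZero m := ⟨by omega⟩
      obtain ⟨b, hb⟩ := exists_ne (0 : EuclideanSpace ℝ (Fin m))
      exact ⟨b, hb, fun x hx => absurd (hfa x hx) (ha ▸ hf0 x hx.1)⟩
    · exact ⟨a, ha, hfa⟩
  set T := E ∩ frontier D
  have hTcpt : IsCompact T := hEcpt.inter_right isClosed_frontier
  set h := fun x => if x ∈ frontier D then b else f x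
  have hhK : EqOn h f K := fun x hx => by
    by_cases hxD : x ∈ frontier D
    · simp [h, hxD, hfb x ⟨hx, hxD⟩]
    · simp [h, hxD]
  have hhT : EqOn h (fun _ => b) T := fun x hx => if_pos hx.2
  have hh : ContinuousOn h (K ∪ T) := (hfc.congr hhK).union_of_isClosed
    (continuousOn_const.congr hhT) hKcpt.isClosed hTcpt.isClosed
  have hh0 : ∀ x ∈ K ∪ T, h x ≠ 0 := by
    rintro x (hx | hx)
    · exact hhK hx ▸ hf0 x hx
    · exact hhT hx ▸ hb0
  obtain ⟨g, hg, hgh, hg0⟩ := hh.exists_continuous_eqOn_forall_ne_zero (hKcpt.union hTcpt) hEcpt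
    (by rwa [finrank_euclideanSpace_fin]) hh0
  exact ⟨g, hg.continuousOn, fun x hx => (hgh (.inl hx)).trans (hhK hx), hg0,
    b, fun x hx => (hgh (.inr hx)).trans (hhT hx)⟩

/-- **Lemma 2 (Chirka).** If `E` is a compact subset of the closure of a domain `D ⊆ ℝ^N`
with `ℋ^m(E) = 0`, `m < N`, and `K ⊆ E` is compact, then every continuous map
`f : K → ℝ^m \ {0}` which is constant on `K ∩ ∂D` extends to a continuous map
`E → ℝ^m \ {0}` which is constant on `E ∩ ∂D`. -/
theorem chirka_lemma2_extension
    {N m : ℕ} (hm : 1 ≤ m) (hmN : m < N)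
    (D : Set (EuclideanSpace ℝ (Fin N))) (hDopen : IsOpen D) (hDconn : IsConnected D)
    (E : Set (EuclideanSpace ℝ (Fin N))) (hEcpt : IsCompact E) (hED : E ⊆ closure D)
    (hE0 : μH[(m : ℝ)] E = 0)
    (K : Set (EuclideanSpace ℝ (Fin N))) (hKcpt : IsCompact K) (hKE : K ⊆ E)
    (f : EuclideanSpace ℝ (Fin N) → EuclideanSpace ℝ (Fin m))
    (hfc : ContinuousOn f K) (hf0 : ∀ x ∈ K, f x ≠ 0)
    (a : EuclideanSpace ℝ (Fin m)) (hfa : ∀ x ∈ K ∩ frontier D, f x = a) :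
    ∃ g : EuclideanSpace ℝ (Fin N) → EuclideanSpace ℝ (Fin m),
      ContinuousOn g E ∧ (∀ x ∈ K, g x = f x) ∧ (∀ x ∈ E, g x ≠ 0) ∧
      ∃ b : EuclideanSpace ℝ (Fin m), ∀ x ∈ E ∩ frontier D, g x = b :=
  chirka_lemma2_extension_general hm D E hEcpt hE0 K hKcpt f hfc hf0 a hfa
end

section
/- Let X be a locally compact Hausdorff space and X ⊔ ∘ its one-point compactification. If X is a bounded subset of ℝ^N relatively closed in an open set D, then the condition H^1(X ⊔ ∘, ℤ) = 0 (i.e., every nonvanishing continuous function on X ⊔ ∘ has a continuous logarithm) is equivalent to: every continuous nonvanishing complex-valued function on the closure of X in ℝ^N that is constant on (closure of X) \ X admits a continuous logarithm on the closure of X which is also constant on (closure of X) \ X. -/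
open MeasureTheory Metric Set Topology

/-- A topological space is *simply co-connected* if every continuous zero-free
complex-valued function on it has a continuous logarithm. -/
def SimplyCoconnected (X : Type*) [TopologicalSpace X] : Prop :=
  ∀ f : C(X, ℂ), (∀ x, f x ≠ 0) →
    ∃ g : C(X, ℂ), ∀ x, Complex.exp (g x) = f x

/-- For a bounded set `X ⊆ ℝ^N`, relatively closed in an open set `D`, the condition
`H^1(X ⊔ ∘, ℤ) = 0` (every zero-free continuous function on the one-point
compactification `X ⊔ ∘` has a continuous logarithm) is equivalent to: every continuous
zero-free function on `closure X` that is constant on `closure X \ X` has a continuous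
logarithm on `closure X` that is constant on `closure X \ X`. -/
theorem onePoint_simplyCoconnected_iff_closure_log
    {N : ℕ} (D : Set (EuclideanSpace ℝ (Fin N))) (hD : IsOpen D)
    (X : Set (EuclideanSpace ℝ (Fin N))) (hXD : X ⊆ D)
    (hXbdd : Bornology.IsBounded X) (hXclosed : closure X ∩ D ⊆ X) :
    SimplyCoconnected (OnePoint X) ↔
      (∀ f : C(closure X, ℂ), (∀ p, f p ≠ 0) →
        (∃ a : ℂ, ∀ p : closure X, (p : EuclideanSpace ℝ (Fin N)) ∈ closure X \ X → f p = a) →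
        ∃ g : C(closure X, ℂ), (∀ p, Complex.exp (g p) = f p) ∧
          ∃ b : ℂ, ∀ p : closure X, (p : EuclideanSpace ℝ (Fin N)) ∈ closure X \ X → g p = b) := by
  classical
  have hXeq : X = D ∩ closure X :=
    subset_antisymm (fun x hx => ⟨hXD hx, subset_closure hx⟩)
      (fun x hx => hXclosed ⟨hx.2, hx.1⟩)
  have hKcomp : IsCompact (closure X) := hXbdd.isCompact_closure
  haveI : CompactSpace (closure X) := isCompact_iff_compactSpace.mp hKcomp
  haveI : LocallyCompactSpace X :=
    IsLocallyClosed.locallyCompactSpace (s := X) ⟨D, closure X, hD, isClosed_closure, hXeq⟩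
  set j : X → ↥(closure X) := fun x => ⟨(x : EuclideanSpace ℝ (Fin N)), subset_closure x.2⟩
    with hjdef
  have hj : Continuous j := Continuous.subtype_mk continuous_subtype_val _
  set φ : ↥(closure X) → OnePoint ↥X := fun q =>
    if h : (q : EuclideanSpace ℝ (Fin N)) ∈ X then OnePoint.some (⟨q, h⟩ : X) else (OnePoint.infty)
    with hφdef
  have hφj : ∀ x : X, φ (j x) = OnePoint.some x := by
    intro x
    simp only [hφdef, hjdef]
    rw [dif_pos x.2]
  have hphiInf : ∀ q : ↥(closure X), (q : EuclideanSpace ℝ (Fin N)) ∉ X →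
      φ q = (OnePoint.infty) := fun q h => dif_neg h
  have hφsome : ∀ (q : ↥(closure X)) (h : (q : EuclideanSpace ℝ (Fin N)) ∈ X),
      φ q = OnePoint.some ⟨q, h⟩ := fun q h => dif_pos h
  have hφcont : Continuous φ := by
    rw [continuous_def]
    intro s hs
    by_cases hInf : (OnePoint.infty) ∈ s
    · rw [← isClosed_compl_iff]
      have hc : IsCompact (((OnePoint.some : X → OnePoint X) ⁻¹' s)ᶜ) :=
        ((OnePoint.isOpen_iff_of_mem' hInf).mp hs).1
      have himg : (φ ⁻¹' s)ᶜ = j '' (((OnePoint.some : X → OnePoint X) ⁻¹' s)ᶜ) := by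
        ext q
        simp only [mem_compl_iff, mem_preimage, mem_image]
        constructor
        · intro hq
          by_cases h : (q : EuclideanSpace ℝ (Fin N)) ∈ X
          · refine ⟨⟨q, h⟩, ?_, Subtype.ext rfl⟩
            intro hmem
            exact hq (by rwa [hφsome q h])
          · exact absurd hInf (hphiInf q h ▸ hq)
        · rintro ⟨x, hx, rfl⟩
          rw [hφj]
          exact hx
      rw [himg]
      exact (hc.image hj).isClosed
    · rw [OnePoint.isOpen_iff_of_notMem hInf] at hs
      obtain ⟨V, hV, hVeq⟩ := isOpen_induced_iff.mp hs
      have : φ ⁻¹' s = (Subtype.val : ↥(closure X) → EuclideanSpace ℝ (Fin N)) ⁻¹' (V ∩ D) := by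
        ext q
        simp only [mem_preimage, mem_inter_iff]
        constructor
        · intro hq
          by_cases h : (q : EuclideanSpace ℝ (Fin N)) ∈ X
          · rw [hφsome q h] at hq
            have : (⟨(q : EuclideanSpace ℝ (Fin N)), h⟩ : X) ∈
                (OnePoint.some : X → OnePoint X) ⁻¹' s := hq
            rw [← hVeq] at this
            exact ⟨this, hXD h⟩
          · rw [hphiInf q h] at hq
            exact absurd hq hInf
        · rintro ⟨hqV, hqD⟩
          have hqX : (q : EuclideanSpace ℝ (Fin N)) ∈ X := hXclosed ⟨q.2, hqD⟩
          rw [hφsome q hqX]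
          have : (⟨(q : EuclideanSpace ℝ (Fin N)), hqX⟩ : X) ∈
              (Subtype.val ⁻¹' V : Set X) := hqV
          rw [hVeq] at this
          exact this
      rw [this]
      exact (hV.inter hD).preimage continuous_subtype_val
  have hfj : ∀ (f : C(closure X, ℂ)) (q : ↥(closure X))
      (h : (q : EuclideanSpace ℝ (Fin N)) ∈ X), f (j ⟨q, h⟩) = f q := by
    intro f q h
    exact congrArg f (Subtype.ext rfl)
  by_cases hbnd : (closure X \ X).Nonempty
  · -- boundary nonempty: φ is a quotient map
    obtain ⟨p0, hp0⟩ := hbnd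
    set q0 : ↥(closure X) := ⟨p0, hp0.1⟩ with hq0def
    have hq0X : (q0 : EuclideanSpace ℝ (Fin N)) ∉ X := hp0.2
    have hsurj : Function.Surjective φ := by
      intro z
      induction z using OnePoint.rec with
      | infty => exact ⟨q0, hphiInf q0 hq0X⟩
      | coe x => exact ⟨j x, hφj x⟩
    haveI : T4Space (OnePoint ↥X) := {}
    have hquot : IsQuotientMap φ :=
      IsQuotientMap.of_surjective_continuous hsurj hφcont
    constructor
    · rintro hSC f hf0 ⟨a, ha⟩
      have ha0 : a ≠ 0 := (ha q0 ⟨hp0.1, hp0.2⟩) ▸ hf0 q0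
      set F : OnePoint X → ℂ := fun z => z.elim a (fun x => f (j x)) with hFdef
      have hFφ : ∀ q, F (φ q) = f q := by
        intro q
        by_cases h : (q : EuclideanSpace ℝ (Fin N)) ∈ X
        · rw [hφsome q h]
          exact hfj f q h
        · rw [hphiInf q h]
          exact (ha q ⟨q.2, h⟩).symm
      have hFcont : Continuous F := by
        rw [hquot.continuous_iff]
        rw [show F ∘ φ = ⇑f from funext hFφ]
        exact f.continuous
      have hF0 : ∀ z, F z ≠ 0 := by
        intro z
        induction z using OnePoint.rec with
        | infty => exact ha0
        | coe x => exact hf0 (j x)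
      obtain ⟨G, hG⟩ := hSC ⟨F, hFcont⟩ hF0
      refine ⟨⟨fun q => G (φ q), G.continuous.comp hφcont⟩, ?_, G (OnePoint.infty), ?_⟩
      · intro q
        have := hG (φ q)
        simp only [ContinuousMap.coe_mk] at this ⊢
        rw [this]
        exact hFφ q
      · intro q hq
        simp only [ContinuousMap.coe_mk]
        rw [hphiInf q hq.2]
    · intro hR F hF0
      set f : C(closure X, ℂ) := F.comp ⟨φ, hφcont⟩ with hfdef
      have hf0 : ∀ q, f q ≠ 0 := fun q => hF0 _
      obtain ⟨g, hg, b, hb⟩ := hR f hf0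
        ⟨F (OnePoint.infty), fun q hq => by
          simp only [hfdef, ContinuousMap.comp_apply, ContinuousMap.coe_mk]
          rw [hphiInf q hq.2]⟩
      set G : OnePoint X → ℂ := fun z => z.elim b (fun x => g (j x)) with hGdef
      have hGφ : ∀ q, G (φ q) = g q := by
        intro q
        by_cases h : (q : EuclideanSpace ℝ (Fin N)) ∈ X
        · rw [hφsome q h]
          exact hfj g q h
        · rw [hphiInf q h]
          exact (hb q ⟨q.2, h⟩).symm
      have hGcont : Continuous G := by
        rw [hquot.continuous_iff]
        rw [show G ∘ φ = ⇑g from funext hGφ]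
        exact g.continuous
      refine ⟨⟨G, hGcont⟩, ?_⟩
      intro z
      induction z using OnePoint.rec with
      | infty =>
          have h1 : G (OnePoint.infty) = b := rfl
          have h2 : Complex.exp b = f q0 := by
            rw [← hb q0 ⟨hp0.1, hp0.2⟩]
            exact hg q0
          have h3 : f q0 = F (OnePoint.infty) := by
            simp only [hfdef, ContinuousMap.comp_apply, ContinuousMap.coe_mk]
            rw [hphiInf q0 hq0X]
          simp only [ContinuousMap.coe_mk]
          rw [h1, h2, h3]
      | coe x =>
          have h1 : G (OnePoint.some x) = g (j x) := rfl
          have h2 : Complex.exp (g (j x)) = f (j x) := hg (j x)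
          have h3 : f (j x) = F (OnePoint.some x) := by
            simp only [hfdef, ContinuousMap.comp_apply, ContinuousMap.coe_mk]
            rw [hφj x]
          simp only [ContinuousMap.coe_mk]
          rw [h1, h2, h3]
  · -- boundary empty: X is compact and closed
    have hXK : closure X ⊆ X := by
      intro p hp
      by_contra h
      exact hbnd ⟨p, hp, h⟩
    have hXcl : closure X = X := subset_antisymm hXK subset_closure
    haveI : CompactSpace X := isCompact_iff_compactSpace.mp (hXcl ▸ hKcomp)
    have hcc : Filter.coclosedCompact X = ⊥ := by
      rw [Filter.coclosedCompact_eq_cocompact, Filter.cocompact_eq_bot]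
    constructor
    · rintro hSC f hf0 ⟨a, ha⟩
      set F : OnePoint X → ℂ := fun z => z.elim 1 (fun x => f (j x)) with hFdef
      have hFcont : Continuous F := by
        rw [OnePoint.continuous_iff]
        constructor
        · rw [hcc]; exact Filter.tendsto_bot
        · exact f.continuous.comp hj
      have hF0 : ∀ z, F z ≠ 0 := by
        intro z
        induction z using OnePoint.rec with
        | infty => exact one_ne_zero
        | coe x => exact hf0 (j x)
      obtain ⟨G, hG⟩ := hSC ⟨F, hFcont⟩ hF0
      refine ⟨⟨fun q => G (φ q), G.continuous.comp hφcont⟩, ?_, 0, ?_⟩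
      · intro q
        have hq : (q : EuclideanSpace ℝ (Fin N)) ∈ X := hXK q.2
        simp only [ContinuousMap.coe_mk]
        rw [hφsome q hq]
        have := hG (OnePoint.some ⟨q, hq⟩)
        simp only [ContinuousMap.coe_mk] at this
        rw [this]
        exact hfj f q hq
      · intro q hq
        exact absurd (hXK hq.1) hq.2
    · intro hR F hF0
      set f : C(closure X, ℂ) := F.comp ⟨φ, hφcont⟩ with hfdef
      have hf0 : ∀ q, f q ≠ 0 := fun q => hF0 _
      obtain ⟨g, hg, b, hb⟩ := hR f hf0
        ⟨0, fun q hq => absurd (hXK hq.1) hq.2⟩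
      set G : OnePoint X → ℂ :=
        fun z => z.elim (Complex.log (F (OnePoint.infty))) (fun x => g (j x)) with hGdef
      have hGcont : Continuous G := by
        rw [OnePoint.continuous_iff]
        constructor
        · rw [hcc]; exact Filter.tendsto_bot
        · exact g.continuous.comp hj
      refine ⟨⟨G, hGcont⟩, ?_⟩
      intro z
      induction z using OnePoint.rec with
      | infty =>
          simp only [ContinuousMap.coe_mk]
          exact Complex.exp_log (hF0 (OnePoint.infty))
      | coe x =>
          have h2 : Complex.exp (g (j x)) = f (j x) := hg (j x)
          have h3 : f (j x) = F (OnePoint.some x) := by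
            simp only [hfdef, ContinuousMap.comp_apply, ContinuousMap.coe_mk]
            rw [hφj x]
          simp only [ContinuousMap.coe_mk]
          rw [show G (OnePoint.some x) = g (j x) from rfl, h2, h3]
end

section
/- Every totally disconnected compact Hausdorff space K is simply co-connected, i.e., every continuous function f : K → ℂ \ {0} admits a continuous logarithm on K. -/
open Set Topology

/-- Every totally disconnected compact Hausdorff space is simply co-connected: every
continuous zero-free complex-valued function on it admits a continuous logarithm. -/
theorem totallyDisconnected_simplyCoconnected
    {K : Type*} [TopologicalSpace K] [CompactSpace K] [T2Space K]
    [TotallyDisconnectedSpace K]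
    (f : C(K, ℂ)) (hf : ∀ x, f x ≠ 0) :
    ∃ g : C(K, ℂ), ∀ x, Complex.exp (g x) = f x := by
  -- For every `x`, pick a clopen neighborhood on which `f` stays in the ball
  -- `ball (f x) ‖f x‖`.
  have h1 : ∀ x : K, ∃ V : Set K, IsClopen V ∧ x ∈ V ∧ ∀ y ∈ V, ‖f y - f x‖ < ‖f x‖ := by
    intro x
    have hx : x ∈ f ⁻¹' Metric.ball (f x) ‖f x‖ := by
      simp [Metric.mem_ball, norm_pos_iff, hf x]
    obtain ⟨V, hV, hxV, hVU⟩ :=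
      compact_exists_isClopen_in_isOpen (Metric.isOpen_ball.preimage f.continuous) hx
    refine ⟨V, hV, hxV, fun y hy => ?_⟩
    have := hVU hy
    simpa [Metric.mem_ball, dist_eq_norm] using this
  choose V hVclopen hmem hball using h1
  -- extract a finite subcover
  obtain ⟨t, ht⟩ := IsCompact.elim_finite_subcover isCompact_univ V
    (fun x => (hVclopen x).2) (fun y _ => mem_iUnion.2 ⟨y, hmem y⟩)
  -- on each slit plane point, `f y / f a` has a continuous log near `y ∈ V a`
  have hslit : ∀ a : K, ∀ y ∈ V a, f y / f a ∈ Complex.slitPlane := by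
    intro a y hy
    apply Complex.ball_one_subset_slitPlane
    have hfa : (0 : ℝ) < ‖f a‖ := norm_pos_iff.2 (hf a)
    rw [Metric.mem_ball, dist_eq_norm]
    rw [div_sub_one (hf a), norm_div, div_lt_one hfa]
    exact hball a y hy
  -- build, by induction on finite sets, a continuous partial logarithm
  have key : ∀ s : Finset K, ∃ g : K → ℂ, Continuous g ∧
      ∀ y ∈ ⋃ x ∈ s, V x, Complex.exp (g y) = f y := by
    classical
    intro s
    induction s using Finset.induction_on with
    | empty => exact ⟨0, continuous_const, fun y hy => by simp at hy⟩
    | @insert a s ha ih =>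
      obtain ⟨g, hg, hgexp⟩ := ih
      have hUclopen : IsClopen (⋃ x ∈ s, V x) := by
        refine ⟨Set.Finite.isClosed_biUnion s.finite_toSet fun x _ => (hVclopen x).1,
          isOpen_biUnion fun x _ => (hVclopen x).2⟩
      set W : Set K := V a \ ⋃ x ∈ s, V x with hW
      have hWclopen : IsClopen W := (hVclopen a).diff hUclopen
      refine ⟨fun y => if y ∈ W then Complex.log (f y / f a) + Complex.log (f a) else g y,
        ?_, ?_⟩
      · rw [continuous_iff_continuousAt]
        intro x
        by_cases hx : x ∈ W
        · have hnb : W ∈ nhds x := hWclopen.2.mem_nhds hx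
          have hca : ContinuousAt (fun y => Complex.log (f y / f a) + Complex.log (f a)) x := by
            refine ContinuousAt.add ?_ continuousAt_const
            refine ContinuousAt.comp (continuousAt_clog ?_) ?_
            · exact hslit a x hx.1
            · exact (f.continuous.continuousAt).div continuousAt_const (hf a)
          refine hca.congr ?_
          filter_upwards [hnb] with y hy
          simp [hy]
        · have hnb : Wᶜ ∈ nhds x := hWclopen.compl.2.mem_nhds hx
          refine (hg.continuousAt).congr ?_
          filter_upwards [hnb] with y hy
          simp only [Set.mem_compl_iff] at hy
          simp [hy]
      · intro y hy
        by_cases hyW : y ∈ W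
        · simp only [if_pos hyW]
          rw [Complex.exp_add, Complex.exp_log (hf a),
            Complex.exp_log (div_ne_zero (hf y) (hf a))]
          exact div_mul_cancel₀ (f y) (hf a)
        · have hyU : y ∈ ⋃ x ∈ s, V x := by
            simp only [Finset.mem_insert, Set.mem_iUnion, exists_prop] at hy
            obtain ⟨x, hx, hyx⟩ := hy
            rcases hx with rfl | hx
            · by_contra hc
              exact hyW ⟨hyx, hc⟩
            · exact Set.mem_iUnion₂.2 ⟨x, hx, hyx⟩
          simp only [if_neg hyW]
          exact hgexp y hyU
  obtain ⟨g, hg, hgexp⟩ := key t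
  exact ⟨⟨g, hg⟩, fun x => hgexp x (ht (Set.mem_univ x))⟩
end

section
/- Special case of Lemma 4 in the plane: let E ⊆ ℂ be a closed subset such that every continuous nonvanishing function on the one-point compactification E ⊔ ∘ has a continuous logarithm. Then ℂ \ E is connected. -/
/-!
Suppose `ℂ \ E` splits into disjoint open sets `A ∋ a` and `B ∋ b`. The function
`(z - a) / (z - b)`, extended by `1` at `∞`, is zero-free on `E ⊔ ∘`, so it has a logarithm there,
and by Tietze this logarithm extends to a continuous `G` on the Riemann sphere. Gluing
`(z - a) / (z - b) · e^{-G}` on `A` with the constant `1` off `A` gives a continuous function on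
the sphere (the two agree on `∂A ⊆ E ∪ {∞}`) whose only zero is the simple zero at `a`.
In the chart `w ↦ a + 1 / w` it becomes a zero-free function on the simply connected plane, hence
has a logarithm, and on a small circle around `a` this produces a continuous logarithm of
`z - a`, which does not exist.
-/

open Set Topology Filter Metric Complex Bornology
open scoped OnePoint

theorem ContinuousMap.exists_exp_eq_of_forall_ne_zero {X : Type*} [TopologicalSpace X]
    [SimplyConnectedSpace X] [LocallyPathConnectedSpace X] (f : C(X, ℂ)) (hf : ∀ x, f x ≠ 0) :
    ∃ g : C(X, ℂ), ∀ x, exp (g x) = f x := by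
  obtain ⟨x₀⟩ : Nonempty X := inferInstance
  obtain ⟨g, ⟨-, hg⟩, -⟩ :=
    isCoveringMapOn_exp.existsUnique_continuousMap_lifts f (exp_log (hf x₀)) hf
  exact ⟨g, congrFun hg⟩

theorem Complex.not_forall_exp_eq_sub_of_continuousOn_sphere (c : ℂ) {r : ℝ} (hr : 0 < r)
    {θ : ℂ → ℂ} (hθ : ContinuousOn θ (sphere c r)) : ¬ ∀ z ∈ sphere c r, exp (θ z) = z - c := by
  intro hexp
  set γ : ℝ → ℂ := fun t => c + r * exp (t * I)
  have hγ : ∀ t, γ t ∈ sphere c r := fun t => by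
    simp [γ, norm_exp_ofReal_mul_I, abs_of_pos hr]
  set h : ℝ → ℂ := fun t => θ (γ t)
  have hh : Continuous h := hθ.comp_continuous (by fun_prop) hγ
  -- `h` and `t ↦ h 0 + t I` lift the same path through the covering `exp` and agree at `0`.
  have hlift : h = fun t : ℝ => h 0 + t * I := by
    refine isCoveringMap_exp.eq_of_comp_eq hh (by fun_prop) (funext fun t => Subtype.ext ?_) 0
      (by simp)
    simp only [Function.comp_apply, h, hexp _ (hγ _), exp_add]
    simp [γ]
  have hloop : h (2 * Real.pi) = h 0 := by
    simp only [h, γ]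
    push_cast
    rw [exp_two_pi_mul_I]
    simp
  have := congrFun hlift (2 * Real.pi)
  simp [hloop, Real.pi_ne_zero, I_ne_zero] at this

theorem Complex.exists_continuousOn_exp_eq_sub (a b : ℂ) :
    ∃ L : ℂ → ℂ, ContinuousOn L (ball a (dist a b)) ∧
      ∀ z ∈ ball a (dist a b), exp (L z) = z - b := by
  rcases eq_or_ne a b with rfl | hab
  · simp
  have hab' : a - b ≠ 0 := sub_ne_zero.mpr hab
  have hslit : ∀ z ∈ ball a (dist a b), (z - b) / (a - b) ∈ slitPlane := by
    intro z hz
    have : (z - b) / (a - b) = 1 + (z - a) / (a - b) := by field_simp; ring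
    rw [this]
    refine mem_slitPlane_of_norm_lt_one ?_
    rw [norm_div, div_lt_one (norm_pos_iff.mpr hab'), ← dist_eq_norm, ← dist_eq_norm]
    exact hz
  refine ⟨fun z => log ((z - b) / (a - b)) + log (a - b), ?_, fun z hz => ?_⟩
  · exact ((continuousOn_id.sub continuousOn_const).div_const _).clog hslit |>.add
      continuousOn_const
  · rw [exp_add, exp_log (div_ne_zero ?_ hab'), exp_log hab', div_mul_cancel₀ _ hab']
    rintro h
    simpa [sub_eq_zero.mp h] using hslit z hz

theorem Topology.IsClosedEmbedding.onePointMap {X Y : Type*} [TopologicalSpace X]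
    [TopologicalSpace Y] [T2Space X] [T2Space Y] [LocallyCompactSpace Y] {f : X → Y}
    (hf : IsClosedEmbedding f) : IsClosedEmbedding (OnePoint.map f) := by
  refine (OnePoint.continuous_map hf.continuous ?_).isClosedEmbedding
    (Option.map_injective hf.injective)
  rw [coclosedCompact_eq_cocompact, coclosedCompact_eq_cocompact]
  exact hf.tendsto_cocompact

theorem continuous_piecewise_one_of_disjoint {X M : Type*} [TopologicalSpace X]
    [TopologicalSpace M] [One M] {U V : Set X} [∀ x, Decidable (x ∈ U)] (hU : IsOpen U)
    (hV : IsOpen V) (hUV : Disjoint U V) {φ : X → M} (hφ : ContinuousOn φ Vᶜ)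
    (hφ1 : ∀ x ∉ U ∪ V, φ x = 1) : Continuous (U.piecewise φ 1) := by
  have hclosure : closure U ⊆ Vᶜ := subset_compl_iff_disjoint_right.mpr (hUV.closure_left hV)
  refine continuous_piecewise (fun x hx => ?_) (hφ.mono hclosure) continuousOn_const
  rw [hU.frontier_eq] at hx
  exact hφ1 x (not_or.mpr ⟨hx.2, hclosure hx.1⟩)

section OnePoint

variable {𝕜 : Type*} [NormedField 𝕜]

open Classical in
noncomputable def inversionAt (a w : 𝕜) : OnePoint 𝕜 := if w = 0 then ∞ else ↑(a + w⁻¹)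

theorem inversionAt_ne (a w : 𝕜) : inversionAt a w ≠ a := by
  unfold inversionAt
  split_ifs with hw
  · exact OnePoint.infty_ne_coe a
  · simpa [OnePoint.coe_eq_coe] using hw

theorem inversionAt_inv_sub {a z : 𝕜} (hz : z ≠ a) : inversionAt a (z - a)⁻¹ = z := by
  simp [inversionAt, sub_ne_zero.mpr hz]

theorem continuous_inversionAt [ProperSpace 𝕜] (a : 𝕜) : Continuous (inversionAt a) := by
  refine continuous_iff_continuousAt.mpr fun w => ?_
  rcases eq_or_ne w 0 with rfl | hw
  · rw [← continuousWithinAt_compl_self, ContinuousWithinAt, inversionAt, if_pos rfl]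
    have : Tendsto (fun w : 𝕜 => a + w⁻¹) (𝓝[≠] 0) (coclosedCompact 𝕜) := by
      rw [coclosedCompact_eq_cocompact, ← cobounded_eq_cocompact]
      exact (tendsto_const_add_cobounded a).comp tendsto_inv₀_nhdsNE_zero
    refine (OnePoint.tendsto_coe_infty.comp this).congr' ?_
    filter_upwards [self_mem_nhdsWithin] with z (hz : z ≠ 0)
    simp [inversionAt, hz]
  · have : inversionAt a =ᶠ[𝓝 w] fun z => ↑(a + z⁻¹) := by
      filter_upwards [compl_singleton_mem_nhds hw] with z (hz : z ≠ 0)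
      simp [inversionAt, hz]
    rw [continuousAt_congr this]
    exact OnePoint.continuous_coe.continuousAt.comp
      (continuousAt_const.add (continuousAt_inv₀ hw))

theorem tendsto_div_sub_cobounded (a b : 𝕜) :
    Tendsto (fun z : 𝕜 => (z - a) / (z - b)) (cobounded 𝕜) (𝓝 1) := by
  have h : Tendsto (fun z : 𝕜 => (1 - a * z⁻¹) / (1 - b * z⁻¹)) (cobounded 𝕜) (𝓝 1) := by
    have hinv := tendsto_inv₀_cobounded (α := 𝕜)
    simpa [Pi.div_def] using (tendsto_const_nhds.sub (tendsto_const_nhds.mul hinv)).div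
      (tendsto_const_nhds.sub (tendsto_const_nhds.mul hinv)) (by simp : (1 : 𝕜) - b * 0 ≠ 0)
  refine h.congr' ?_
  filter_upwards [eventually_ne_cobounded 0] with z hz
  field_simp

noncomputable def moebiusRatio (a b : 𝕜) (x : OnePoint 𝕜) : 𝕜 :=
  x.elim 1 fun z => (z - a) / (z - b)

@[simp] theorem moebiusRatio_infty (a b : 𝕜) : moebiusRatio a b ∞ = 1 := rfl

@[simp] theorem moebiusRatio_coe (a b z : 𝕜) : moebiusRatio a b z = (z - a) / (z - b) := rfl

theorem moebiusRatio_ne_zero {a b : 𝕜} {x : OnePoint 𝕜} (ha : x ≠ a) (hb : x ≠ b) :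
    moebiusRatio a b x ≠ 0 := by
  induction x using OnePoint.rec with
  | infty => simp
  | coe z =>
    simp only [ne_eq, OnePoint.coe_eq_coe] at ha hb
    simp [sub_ne_zero, ha, hb]

theorem continuousOn_moebiusRatio [ProperSpace 𝕜] (a b : 𝕜) :
    ContinuousOn (moebiusRatio a b) {(b : OnePoint 𝕜)}ᶜ := by
  refine (isOpen_compl_singleton.continuousOn_iff).mpr fun x hx => ?_
  induction x using OnePoint.rec with
  | infty =>
    rw [OnePoint.continuousAt_infty', coclosedCompact_eq_cocompact, ← cobounded_eq_cocompact]
    exact tendsto_div_sub_cobounded a b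
  | coe z =>
    have hz : z - b ≠ 0 := sub_ne_zero.mpr fun h => hx (h ▸ rfl)
    rw [OnePoint.continuousAt_coe]
    exact (continuousAt_id.sub continuousAt_const).div (continuousAt_id.sub continuousAt_const) hz

end OnePoint

theorem exists_ne_eq_zero_of_eq_sub_mul_exp (Φ : C(OnePoint ℂ, ℂ)) {a : ℂ} {r : ℝ} (hr : 0 < r)
    {H : ℂ → ℂ} (hH : ContinuousOn H (sphere a r))
    (hΦ : ∀ z ∈ sphere a r, Φ z = (z - a) * exp (H z)) : ∃ x ≠ (a : OnePoint ℂ), Φ x = 0 := by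
  by_contra! hΦ0
  obtain ⟨L, hL⟩ := ContinuousMap.exists_exp_eq_of_forall_ne_zero
    (Φ.comp ⟨inversionAt a, continuous_inversionAt a⟩) fun w => hΦ0 _ (inversionAt_ne a w)
  have hza : ∀ z ∈ sphere a r, z ≠ a := fun z hz => ne_of_mem_sphere hz hr.ne'
  refine not_forall_exp_eq_sub_of_continuousOn_sphere a hr
    (θ := fun z => L (z - a)⁻¹ - H z) ?_ fun z hz => ?_
  · exact (L.continuous.comp_continuousOn ((continuousOn_id.sub continuousOn_const).inv₀
      fun z hz => sub_ne_zero.mpr (hza z hz))).sub hH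
  · have := hL (z - a)⁻¹
    simp only [ContinuousMap.comp_apply, ContinuousMap.coe_mk, inversionAt_inv_sub (hza z hz),
      hΦ z hz] at this
    rw [exp_sub, this, mul_div_cancel_right₀ _ (exp_ne_zero _)]

theorem exists_onePoint_log_div_sub {E : Set ℂ} (hE : IsClosed E)
    (hlog : ∀ f : C(OnePoint E, ℂ), (∀ x, f x ≠ 0) →
      ∃ g : C(OnePoint E, ℂ), ∀ x, exp (g x) = f x) {a b : ℂ} (ha : a ∉ E) (hb : b ∉ E) :
    ∃ G : C(OnePoint ℂ, ℂ), exp (G ∞) = 1 ∧ ∀ z ∈ E, exp (G z) = (z - a) / (z - b) := by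
  set j : OnePoint E → OnePoint ℂ := OnePoint.map (↑)
  have hj : IsClosedEmbedding j := hE.isClosedEmbedding_subtypeVal.onePointMap
  have hj_ne : ∀ y, ∀ c ∉ E, j y ≠ c := by
    intro y c hc
    induction y using OnePoint.rec with
    | infty => exact OnePoint.infty_ne_coe c
    | coe z => exact fun h => hc (OnePoint.coe_injective h ▸ z.2)
  obtain ⟨g, hg⟩ := hlog
    ⟨moebiusRatio a b ∘ j, (continuousOn_moebiusRatio a b).comp_continuous hj.continuous
      fun y => hj_ne y b hb⟩
    fun y => moebiusRatio_ne_zero (hj_ne y a ha) (hj_ne y b hb)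
  obtain ⟨G, hG⟩ := ContinuousMap.exists_extension' hj g
  have hGj : ∀ y, exp (G (j y)) = moebiusRatio a b (j y) := fun y =>
    (congrArg exp (congrFun hG y)).trans (hg y)
  exact ⟨G, hGj ∞, fun z hz => hGj (OnePoint.some ⟨z, hz⟩)⟩

theorem not_exists_onePoint_log_div_sub {E A B : Set ℂ} (hA : IsOpen A) (hB : IsOpen B)
    (hAB : Disjoint A B) (hcover : Eᶜ ⊆ A ∪ B) {a b : ℂ} (ha : a ∈ A) (hb : b ∈ B) :
    ¬ ∃ G : C(OnePoint ℂ, ℂ), exp (G ∞) = 1 ∧ ∀ z ∈ E, exp (G z) = (z - a) / (z - b) := by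
  classical
  rintro ⟨G, hGinf, hGE⟩
  set φ : OnePoint ℂ → ℂ := fun x => moebiusRatio a b x / exp (G x)
  have hφ : ContinuousOn φ (OnePoint.some '' B)ᶜ :=
    ((continuousOn_moebiusRatio a b).mono (compl_subset_compl.mpr
      (singleton_subset_iff.mpr (mem_image_of_mem _ hb)))).div (by fun_prop)
      fun x _ => exp_ne_zero _
  have hφ1 : ∀ x ∉ OnePoint.some '' A ∪ OnePoint.some '' B, φ x = 1 := by
    intro x hx
    induction x using OnePoint.rec with
    | infty => simp [φ, hGinf]
    | coe z =>
      have hzE : z ∈ E := by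
        by_contra hzE
        rcases hcover hzE with h | h
        exacts [hx (Or.inl ⟨z, h, rfl⟩), hx (Or.inr ⟨z, h, rfl⟩)]
      simp only [φ, moebiusRatio_coe, ← hGE z hzE]
      exact div_self (exp_ne_zero _)
  set Φ : C(OnePoint ℂ, ℂ) := ⟨(OnePoint.some '' A).piecewise φ 1,
    continuous_piecewise_one_of_disjoint (OnePoint.isOpen_image_coe.mpr hA)
      (OnePoint.isOpen_image_coe.mpr hB)
      ((disjoint_image_iff OnePoint.coe_injective).mpr hAB) hφ hφ1⟩
  obtain ⟨R, hR, hRA⟩ := Metric.isOpen_iff.mp hA a ha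
  have hab : 0 < dist a b := dist_pos.mpr (hAB.ne_of_mem ha hb)
  set r := min (R / 2) (dist a b / 2)
  have hr : 0 < r := by positivity
  have hrA : sphere a r ⊆ A := (sphere_subset_ball (min_lt_of_left_lt (half_lt_self hR))).trans hRA
  have hrb : sphere a r ⊆ ball a (dist a b) :=
    sphere_subset_ball (min_lt_of_right_lt (half_lt_self hab))
  obtain ⟨Lb, hLb, hexpLb⟩ := exists_continuousOn_exp_eq_sub a b
  obtain ⟨x, hxa, hx0⟩ := exists_ne_eq_zero_of_eq_sub_mul_exp Φ hr (H := fun z => -(G z + Lb z))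
    ((G.continuous.comp OnePoint.continuous_coe).continuousOn.add (hLb.mono hrb)).neg
    fun z hz => by
      simp only [Φ, ContinuousMap.coe_mk, piecewise_eq_of_mem _ _ _ (mem_image_of_mem _ (hrA hz)),
        φ, moebiusRatio_coe, exp_neg, exp_add, hexpLb z (hrb hz)]
      field_simp
  by_cases hxA : x ∈ OnePoint.some '' A
  · obtain ⟨z, hzA, rfl⟩ := hxA
    have hxb : (z : OnePoint ℂ) ≠ b := fun h => hAB.ne_of_mem hzA hb (OnePoint.coe_injective h)
    simp only [Φ, ContinuousMap.coe_mk, piecewise_eq_of_mem _ _ _ (mem_image_of_mem _ hzA),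
      φ] at hx0
    exact div_ne_zero (moebiusRatio_ne_zero hxa hxb) (exp_ne_zero _) hx0
  · simp only [Φ, ContinuousMap.coe_mk, piecewise_eq_of_notMem _ _ _ hxA, Pi.one_apply] at hx0
    exact one_ne_zero hx0

/-- Plane case of Lemma 4: if `E ⊆ ℂ` is closed and every continuous zero-free function
on the one-point compactification `E ⊔ ∘` has a continuous logarithm
(`H^1(E ⊔ ∘, ℤ) = 0`), then `ℂ \ E` is connected. -/
theorem plane_complement_connected_of_onePoint_simplyCoconnected
    (E : Set ℂ) (hE : IsClosed E)
    (hlog : ∀ f : C(OnePoint E, ℂ), (∀ x, f x ≠ 0) →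
      ∃ g : C(OnePoint E, ℂ), ∀ x, Complex.exp (g x) = f x) :
    IsPreconnected Eᶜ := by
  by_contra hsep
  simp only [IsPreconnected, not_forall] at hsep
  obtain ⟨u, v, hu, hv, hcover, ⟨a, haE, hau⟩, ⟨b, hbE, hbv⟩, huv⟩ := hsep
  refine not_exists_onePoint_log_div_sub (hE.isOpen_compl.inter hu) (hE.isOpen_compl.inter hv)
    ?_ (fun z hz => (hcover hz).imp (⟨hz, ·⟩) (⟨hz, ·⟩)) ⟨haE, hau⟩ ⟨hbE, hbv⟩
    (exists_onePoint_log_div_sub hE hlog haE hbE)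
  rw [disjoint_iff_inter_eq_empty, inter_inter_inter_comm, inter_self]
  exact not_nonempty_iff_eq_empty.mp huv
end

section
/- Every compact subset X of ℂ^n with two-dimensional Hausdorff measure zero, ℋ²(X) = 0, is rationally convex: X coincides with its rationally convex hull X̂^r = {z ∈ ℂ^n : P(z) ∈ P(X) for every polynomial P}. -/
open MeasureTheory Metric Set Topology

noncomputable instance {n : ℕ} : MeasurableSpace (EuclideanSpace ℂ (Fin n)) := borel _
instance {n : ℕ} : BorelSpace (EuclideanSpace ℂ (Fin n)) := ⟨rfl⟩

/-- The rationally convex hull of a compact set `X ⊆ ℂ^n`: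
`{z : P(z) ∈ P(X) for every polynomial P}`. -/
def rationalHull {n : ℕ} (X : Set (EuclideanSpace ℂ (Fin n))) :
    Set (EuclideanSpace ℂ (Fin n)) :=
  {z | ∀ P : MvPolynomial (Fin n) ℂ,
      MvPolynomial.eval (fun i => z i) P ∈ (fun w => MvPolynomial.eval (fun i => w i) P) '' X}

/-! If `z ∉ X`, it suffices to find a linear form `ℓ` with `ℓ(w) ≠ ℓ(z)` on `X`, since then the
polynomial `ℓ` takes the value `ℓ(z)` nowhere on `X`. After translating `z` to the origin, the
covectors `a` of the unit polydisc that vanish somewhere on `X` are covered, for every cover of `X`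
by sets `t i`, by slabs `|a ⬝ᵥ vᵢ| ≤ n diam tᵢ` with `vᵢ ∈ tᵢ ∩ X`, and such a slab has volume
`O(diam tᵢ ²)` because `X` stays away from the origin. Hence `ℋ²(X) = 0` forces these covectors to
form a null set, and any other covector of the polydisc gives `ℓ`. -/

open scoped ENNReal

theorem volume_le_mul_of_slices {m : ℕ} {α : Type*} [MeasureSpace α]
    [SigmaFinite (volume : Measure α)] (i : Fin (m + 1)) {S : Set (Fin (m + 1) → α)}
    (hS : MeasurableSet S) (T : Set (Fin m → α)) (c : ℝ≥0∞)
    (hslice : ∀ g ∈ T, volume {x | i.insertNth x g ∈ S} ≤ c)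
    (hproj : ∀ f ∈ S, i.removeNth f ∈ T) :
    volume S ≤ c * volume T := by
  have e := (volume_preserving_piFinSuccAbove (fun _ => α) i).symm
  rw [← e.measure_preimage hS.nullMeasurableSet, Measure.volume_eq_prod,
    Measure.prod_apply_symm (e.measurable hS)]
  refine (lintegral_mono fun g => ?_).trans (lintegral_indicator_const_le T c)
  by_cases hg : g ∈ T
  · rw [indicator_of_mem hg]
    exact hslice g hg
  · rw [indicator_of_notMem hg, nonpos_iff_eq_zero, measure_eq_zero_iff_ae_notMem]
    refine Filter.Eventually.of_forall fun x hx => hg ?_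
    simpa using hproj (i.insertNth x g) hx

theorem norm_dotProduct_le {ι 𝕜 : Type*} [Fintype ι] [SeminormedRing 𝕜] (a v : ι → 𝕜) :
    ‖a ⬝ᵥ v‖ ≤ Fintype.card ι * (‖a‖ * ‖v‖) := by
  calc ‖a ⬝ᵥ v‖ ≤ ∑ j, ‖a j * v j‖ := norm_sum_le _ _
    _ ≤ ∑ _j : ι, ‖a‖ * ‖v‖ := Finset.sum_le_sum fun j _ =>
        (norm_mul_le _ _).trans <| mul_le_mul (norm_le_pi_norm a j) (norm_le_pi_norm v j)
          (norm_nonneg _) (norm_nonneg _)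
    _ = Fintype.card ι * (‖a‖ * ‖v‖) := by simp

def polydiscSlab {ι : Type*} [Fintype ι] (v : ι → ℂ) (ρ : ℝ) : Set (ι → ℂ) :=
  closedBall 0 1 ∩ {a | ‖a ⬝ᵥ v‖ ≤ ρ}

theorem volume_polydiscSlab_le {n : ℕ} (v : Fin n → ℂ) {i : Fin n} (hi : v i ≠ 0) (ρ : ℝ) :
    volume (polydiscSlab v ρ) ≤ ENNReal.ofReal (ρ / ‖v i‖) ^ 2 * NNReal.pi ^ n := by
  obtain ⟨m, rfl⟩ : ∃ m, n = m + 1 := ⟨n - 1, by have := i.pos; omega⟩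
  have hmeas : MeasurableSet (polydiscSlab v ρ) :=
    (isClosed_closedBall.inter (isClosed_le (by fun_prop) continuous_const)).measurableSet
  refine (volume_le_mul_of_slices i hmeas (closedBall 0 1)
    (ENNReal.ofReal (ρ / ‖v i‖) ^ 2 * NNReal.pi) (fun g _ => ?_) (fun f hf => ?_)).trans_eq ?_
  -- each slice along the `i`-th coordinate lies in a disc of radius `ρ / ‖v i‖`
  · set b := ∑ j, g j * v (i.succAbove j)
    refine (measure_mono fun x hx => ?_).trans_eq (Complex.volume_closedBall (-b / v i) _)
    have hsplit : i.insertNth x g ⬝ᵥ v = x * v i + b := by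
      simp [dotProduct, Fin.sum_univ_succAbove _ i, b]
    have hx' : ‖x * v i + b‖ ≤ ρ := hsplit ▸ hx.2
    rw [mem_closedBall, Complex.dist_eq,
      show x - -b / v i = (x * v i + b) / v i by field_simp; ring, norm_div]
    gcongr
  · have hf1 := hf.1
    simp only [mem_closedBall_zero_iff, pi_norm_le_iff_of_nonneg zero_le_one] at hf1 ⊢
    exact fun j => hf1 _
  · rw [volume_pi_closedBall _ zero_le_one]
    simp only [Pi.zero_apply, Complex.volume_closedBall, ENNReal.ofReal_one, one_pow, one_mul,
      Finset.prod_const, Finset.card_univ, Fintype.card_fin]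
    ring

def unitCovectorsWithZeroOn {ι : Type*} [Fintype ι] (s : Set (ι → ℂ)) : Set (ι → ℂ) :=
  closedBall 0 1 ∩ {a | ∃ w ∈ s, a ⬝ᵥ w = 0}

theorem volume_unitCovectorsWithZeroOn_le {n : ℕ} {s : Set (Fin n → ℂ)} {δ : ℝ} (hδ : 0 < δ)
    (hs : ∀ w ∈ s, δ ≤ ‖w‖) (hdiam : ediam s ≠ ⊤) :
    volume (unitCovectorsWithZeroOn s) ≤
      ENNReal.ofReal (n / δ) ^ 2 * NNReal.pi ^ n * ediam s ^ 2 := by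
  rcases s.eq_empty_or_nonempty with rfl | ⟨v, hv⟩
  · simp [unitCovectorsWithZeroOn]
  obtain ⟨j, -⟩ := Function.ne_iff.1 (norm_pos_iff.1 (hδ.trans_le (hs v hv)))
  obtain ⟨i, -, hi⟩ := Finset.exists_max_image Finset.univ (fun j => ‖v j‖) ⟨j, Finset.mem_univ j⟩
  have hδi : δ ≤ ‖v i‖ :=
    (hs v hv).trans ((pi_norm_le_iff_of_nonneg (norm_nonneg _)).2 fun j => hi j (Finset.mem_univ _))
  have hsub : unitCovectorsWithZeroOn s ⊆ polydiscSlab v (n * diam s) := by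
    rintro a ⟨ha, w, hw, haw⟩
    refine ⟨ha, ?_⟩
    calc ‖a ⬝ᵥ v‖ = ‖a ⬝ᵥ (v - w)‖ := by rw [dotProduct_sub, haw, sub_zero]
      _ ≤ n * (‖a‖ * ‖v - w‖) := by simpa using norm_dotProduct_le a (v - w)
      _ ≤ n * (1 * diam s) := by
          gcongr
          · exact mem_closedBall_zero_iff.1 ha
          · exact dist_eq_norm v w ▸ dist_le_diam_of_mem' hdiam hv hw
      _ = n * diam s := by ring
  have hratio : n * diam s / ‖v i‖ ≤ n / δ * diam s := by
    rw [div_mul_eq_mul_div]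
    exact div_le_div_of_nonneg_left (by positivity) hδ hδi
  calc volume (unitCovectorsWithZeroOn s)
      ≤ ENNReal.ofReal (n * diam s / ‖v i‖) ^ 2 * NNReal.pi ^ n :=
        (measure_mono hsub).trans (volume_polydiscSlab_le v (norm_pos_iff.1 (hδ.trans_le hδi)) _)
    _ ≤ ENNReal.ofReal (n / δ * diam s) ^ 2 * NNReal.pi ^ n := by gcongr
    _ = ENNReal.ofReal (n / δ) ^ 2 * NNReal.pi ^ n * ediam s ^ 2 := by
        rw [ENNReal.ofReal_mul (by positivity), diam, ENNReal.ofReal_toReal hdiam]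
        ring

theorem volume_unitCovectorsWithZeroOn_eq_zero {n : ℕ} {K : Set (Fin n → ℂ)} (hK : IsClosed K)
    (h0 : 0 ∉ K) (h2 : μH[2] K = 0) : volume (unitCovectorsWithZeroOn K) = 0 := by
  obtain ⟨δ, hδ, hball⟩ := Metric.isOpen_iff.1 hK.isOpen_compl 0 h0
  have hδK : ∀ w ∈ K, δ ≤ ‖w‖ := fun w hw => by
    by_contra! h
    exact hball (mem_ball_zero_iff.2 h) hw
  set C := ENNReal.ofReal (n / δ) ^ 2 * NNReal.pi ^ n
  have hC : C ≠ ⊤ := by finiteness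
  suffices volume (unitCovectorsWithZeroOn K) / C ≤ 0 by
    simpa [ENNReal.div_eq_zero_iff, hC] using this
  rw [← h2, Measure.hausdorffMeasure_apply]
  refine le_iSup₂_of_le 1 one_pos <|
    le_iInf₂ fun t hKt => le_iInf fun ht => ENNReal.div_le_of_le_mul' ?_
  have hterm : ∀ i, volume (unitCovectorsWithZeroOn (t i ∩ K)) ≤
      C * ⨆ _ : (t i).Nonempty, ediam (t i) ^ (2 : ℝ) := by
    intro i
    have hdiam : ediam (t i ∩ K) ≤ ediam (t i) := ediam_mono inter_subset_left
    refine (volume_unitCovectorsWithZeroOn_le hδ (fun w hw => hδK w hw.2)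
      (hdiam.trans_lt ((ht i).trans_lt ENNReal.one_lt_top)).ne).trans (mul_le_mul_right ?_ C)
    rcases (t i ∩ K).eq_empty_or_nonempty with hempty | hne
    · simp [hempty]
    · exact le_iSup_of_le (hne.mono inter_subset_left) (ENNReal.rpow_two _ ▸ by gcongr)
  calc volume (unitCovectorsWithZeroOn K)
      ≤ volume (⋃ i, unitCovectorsWithZeroOn (t i ∩ K)) := measure_mono fun a ⟨ha, w, hw, haw⟩ =>
        have ⟨i, hi⟩ := mem_iUnion.1 (hKt hw)
        mem_iUnion.2 ⟨i, ha, w, ⟨hi, hw⟩, haw⟩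
    _ ≤ ∑' i, volume (unitCovectorsWithZeroOn (t i ∩ K)) := measure_iUnion_le _
    _ ≤ ∑' i, C * ⨆ _ : (t i).Nonempty, ediam (t i) ^ (2 : ℝ) := ENNReal.tsum_le_tsum hterm
    _ = C * ∑' i, ⨆ _ : (t i).Nonempty, ediam (t i) ^ (2 : ℝ) := ENNReal.tsum_mul_left

theorem exists_dotProduct_ne_of_hausdorffMeasure_eq_zero {n : ℕ} {K : Set (Fin n → ℂ)}
    (hK : IsClosed K) {z : Fin n → ℂ} (hz : z ∉ K) (h2 : μH[2] K = 0) :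
    ∃ a : Fin n → ℂ, ∀ w ∈ K, a ⬝ᵥ w ≠ a ⬝ᵥ z := by
  set K' := IsometryEquiv.addRight z ⁻¹' K
  have hK'null : volume (unitCovectorsWithZeroOn K') = 0 :=
    volume_unitCovectorsWithZeroOn_eq_zero (hK.preimage (continuous_add_const z))
      (by simpa [K'] using hz) (by rw [IsometryEquiv.hausdorffMeasure_preimage, h2])
  obtain ⟨a, ha, ha'⟩ := not_subset.1 fun hsub =>
    (measure_closedBall_pos volume (0 : Fin n → ℂ) one_pos).ne' (measure_mono_null hsub hK'null)
  refine ⟨a, fun w hw haw => ha' ⟨ha, w - z, by simpa [K'] using hw, ?_⟩⟩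
  rw [dotProduct_sub, haw, sub_self]

/-- Every compact set in `ℂ^n` of zero area (`ℋ²`) is rationally convex. -/
theorem rationally_convex_of_H2_null
    {n : ℕ} (X : Set (EuclideanSpace ℂ (Fin n))) (hX : IsCompact X)
    (h2 : μH[(2 : ℝ)] X = 0) :
    rationalHull X = X := by
  refine Subset.antisymm (fun z hz => ?_) fun z hz P => ⟨z, hz, rfl⟩
  by_contra hzX
  have hK : IsClosed (WithLp.ofLp '' X) := (hX.image (PiLp.continuous_ofLp 2 _)).isClosed
  have hK2 : μH[2] (WithLp.ofLp '' X) = 0 := by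
    simpa [h2] using (PiLp.lipschitzWith_ofLp 2 _).hausdorffMeasure_image_le zero_le_two X
  have hzK : z.ofLp ∉ WithLp.ofLp '' X := fun ⟨w, hw, hwz⟩ =>
    hzX (WithLp.ofLp_injective 2 hwz ▸ hw)
  obtain ⟨a, ha⟩ := exists_dotProduct_ne_of_hausdorffMeasure_eq_zero hK hzK hK2
  obtain ⟨w, hw, hwz⟩ := hz (∑ j, MvPolynomial.C (a j) * MvPolynomial.X j)
  exact ha _ ⟨w, hw, rfl⟩ (by simpa [dotProduct] using hwz)
end
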